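/- A fuzzy frame F=(W,R) satisfies both (i) {w' : R(w,w')=1} is finite for every w ∈ W, and (ii) sup{R(w,w') : w'∈W, R(w,w')<1} < 1 for every w ∈ W, if and only if F ⊨_{KbiG} 𝟏 ⧀ ◇((p ⧀ q) ∧ q). -/

import Mathlib

/- Truth values: the real unit interval [0,1] with its complete lattice structure
   (so `sInf ∅ = 1` and `sSup ∅ = 0`). -/
instance : Fact ((0:ℝ) ≤ 1) := ⟨zero_le_one⟩

abbrev TV : Type := unitInterval

/-- Gödel implication: `a →G b = 1` if `a ≤ b`, else `b`. -/
noncomputable def gimp (a b : TV) : TV := if a ≤ b then 1 else b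

/-- Gödel coimplication: `a ⧀G b = 0` if `a ≤ b`, else `a`. -/
noncomputable def gcoimp (a b : TV) : TV := if a ≤ b then 0 else a

/-- ¬-free formulas: the language `biL_{□,◇}` over the countable variable set `ℕ`. -/
inductive FormulaB : Type
  | var : ℕ → FormulaB
  | and : FormulaB → FormulaB → FormulaB
  | or : FormulaB → FormulaB → FormulaB
  | imp : FormulaB → FormulaB → FormulaB
  | coimp : FormulaB → FormulaB → FormulaB
  | box : FormulaB → FormulaB
  | dia : FormulaB → FormulaB

/-- KbiG valuation on a fuzzy frame `(W, R)` with `R : W × W → [0,1]`: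
`v(□φ,w) = inf_{w'} (R(w,w') →G v(φ,w'))`, `v(◇φ,w) = sup_{w'} min(R(w,w'), v(φ,w'))`. -/
noncomputable def fval {W : Type} (R : W → W → TV) (v : ℕ → W → TV) :
    FormulaB → W → TV
  | .var p, w => v p w
  | .and φ ψ, w => fval R v φ w ⊓ fval R v ψ w
  | .or φ ψ, w => fval R v φ w ⊔ fval R v ψ w
  | .imp φ ψ, w => gimp (fval R v φ w) (fval R v ψ w)
  | .coimp φ ψ, w => gcoimp (fval R v φ w) (fval R v ψ w)
  | .box φ, w => ⨅ w', gimp (R w w') (fval R v φ w')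
  | .dia φ, w => ⨆ w', (R w w') ⊓ fval R v φ w'

/-- `𝟏 := p → p`. -/
def bone : FormulaB := .imp (.var 0) (.var 0)

/-- `𝟎 := p ⧀ p`. -/
def bzero : FormulaB := .coimp (.var 0) (.var 0)

/-- Gödel negation `∼φ := φ → 𝟎`. -/
def bnegG (φ : FormulaB) : FormulaB := .imp φ bzero

/-- Baaz delta `Δτ := ∼(𝟏 ⧀ τ)`. -/
def bDelta (τ : FormulaB) : FormulaB := bnegG (.coimp bone τ)

/-- The formula `𝟏 ⧀ ◇((p ⧀ q) ∧ q)` with `p := var 0`, `q := var 1`. -/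
def phiFin : FormulaB := .coimp bone (.dia (.and (.coimp (.var 0) (.var 1)) (.var 1)))

/-!
`𝟏 ⧀ ◇((p ⧀ q) ∧ q)` has value `1` at `w` iff `◇((p ⧀ q) ∧ q)` has value `< 1`; the values of
`(p ⧀ q) ∧ q` are exactly the functions `f : W → [0,1]` staying strictly below `1`
(`v(p) = 1`, `v(q) = f` realises any such `f`). So validity at `w` says that
`sup_{w'} min(R(w,w'), f(w')) < 1` for every such `f`. If finitely many successors have
`R(w,w') = 1` and the other values are bounded away from `1`, this supremum is at most the
maximum of a finite set of values `< 1` and that bound. Conversely, `f := R(w,·)` off the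
`1`-successors forces (ii), and along infinitely many `1`-successors `f` can run through a
sequence converging to `1`, which forces (i).
-/

section CompleteLinearOrder

variable {ι α : Type*} [CompleteLinearOrder α]

theorem iSup_inf_lt_top_of_finite {r f : ι → α} (hfin : {i | r i = ⊤}.Finite)
    (hsup : sSup {x | ∃ i, r i < ⊤ ∧ r i = x} < ⊤) (hf : ∀ i, f i < ⊤) :
    ⨆ i, r i ⊓ f i < ⊤ := by
  have hfin_sup : hfin.toFinset.sup f < ⊤ :=
    (Finset.sup_lt_iff (bot_le.trans_lt hsup)).2 fun i _ => hf i
  refine lt_of_le_of_lt (iSup_le fun i => ?_) (max_lt hfin_sup hsup)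
  by_cases hi : r i = ⊤
  · exact le_sup_of_le_left (inf_le_right.trans (Finset.le_sup (hfin.mem_toFinset.2 hi)))
  · exact le_sup_of_le_right (inf_le_left.trans (le_sSup ⟨i, lt_top_iff_ne_top.2 hi, rfl⟩))

variable [Nontrivial α] {r : ι → α}

theorem sSup_lt_top_of_forall_iSup_inf_lt_top
    (h : ∀ f : ι → α, (∀ i, f i < ⊤) → ⨆ i, r i ⊓ f i < ⊤) :
    sSup {x | ∃ i, r i < ⊤ ∧ r i = x} < ⊤ := by
  classical
  let f : ι → α := fun i => if r i < ⊤ then r i else ⊥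
  have hf : ∀ i, f i < ⊤ := fun i => by
    by_cases hi : r i < ⊤ <;> simp [f, hi]
  refine lt_of_le_of_lt (sSup_le ?_) (h f hf)
  rintro _ ⟨i, hi, rfl⟩
  exact le_iSup_of_le i (by simp [f, hi])

theorem finite_of_forall_iSup_inf_lt_top [TopologicalSpace α] [OrderTopology α]
    [FirstCountableTopology α] [DenselyOrdered α]
    (h : ∀ f : ι → α, (∀ i, f i < ⊤) → ⨆ i, r i ⊓ f i < ⊤) :
    {i | r i = ⊤}.Finite := by
  by_contra hinf
  obtain ⟨u, -, hu, hu_top⟩ := exists_seq_strictMono_tendsto' (bot_lt_top : (⊥ : α) < ⊤)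
  let emb := Set.Infinite.natEmbedding _ hinf
  let e : ℕ → ι := fun n => emb n
  have he : e.Injective := Subtype.val_injective.comp emb.injective
  have hre : ∀ n, r (e n) = ⊤ := fun n => (emb n).2
  let f : ι → α := Function.extend e u fun _ => ⊥
  have hf : ∀ i, f i < ⊤ := fun i => by
    by_cases hi : ∃ n, e n = i
    · obtain ⟨n, rfl⟩ := hi
      simpa [f, he.extend_apply] using (hu n).2
    · simp [f, Function.extend_apply' _ _ _ hi]
  have hu_le : ∀ n, u n ≤ ⨆ i, r i ⊓ f i := fun n =>
    le_iSup_of_le (e n) (by simp [f, he.extend_apply, hre n])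
  exact (h f hf).not_ge (le_of_tendsto' hu_top hu_le)

end CompleteLinearOrder

theorem gcoimp_inf_lt_one (a b : TV) : gcoimp a b ⊓ b < 1 := by
  unfold gcoimp
  split_ifs with h
  · exact inf_le_left.trans_lt zero_lt_one
  · exact inf_le_right.trans_lt ((not_le.mp h).trans_le unitInterval.le_one')

theorem one_gcoimp_inf_of_lt_one {b : TV} (hb : b < 1) : gcoimp 1 b ⊓ b = b := by
  simp [gcoimp, hb.not_ge, unitInterval.le_one']

theorem fval_phiFin_eq_one_iff {W : Type} (R : W → W → TV) (v : ℕ → W → TV) (w : W) :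
    fval R v phiFin w = 1 ↔ ⨆ w', R w w' ⊓ (gcoimp (v 0 w') (v 1 w') ⊓ v 1 w') < 1 := by
  have hone : fval R v bone w = 1 := by simp [bone, fval, gimp]
  show gcoimp (fval R v bone w) _ = 1 ↔ _
  rw [hone, gcoimp]
  split_ifs with h
  · exact iff_of_false zero_ne_one (not_lt.mpr h)
  · exact iff_of_true rfl (not_le.mp h)

theorem forall_fval_phiFin_eq_one_iff {W : Type} (R : W → W → TV) :
    (∀ (v : ℕ → W → TV) (w : W), fval R v phiFin w = 1) ↔
      ∀ w (f : W → TV), (∀ w', f w' < 1) → ⨆ w', R w w' ⊓ f w' < 1 := by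
  simp only [fval_phiFin_eq_one_iff]
  constructor
  · intro h w f hf
    simpa [fun w' => one_gcoimp_inf_of_lt_one (hf w')] using h (fun k => if k = 0 then 1 else f) w
  · exact fun h v w => h w _ fun w' => gcoimp_inf_lt_one _ _

theorem stmt4_general {W : Type} (R : W → W → TV) :
    ((∀ w : W, {w' | R w w' = 1}.Finite) ∧
     (∀ w : W, sSup {x : TV | ∃ w', R w w' < 1 ∧ R w w' = x} < 1)) ↔
    (∀ (v : ℕ → W → TV) (w : W), fval R v phiFin w = 1) := by
  rw [forall_fval_phiFin_eq_one_iff]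
  constructor
  · rintro ⟨hfin, hsup⟩ w f hf
    exact iSup_inf_lt_top_of_finite (hfin w) (hsup w) hf
  · intro h
    exact ⟨fun w => finite_of_forall_iSup_inf_lt_top (h w),
      fun w => sSup_lt_top_of_forall_iSup_inf_lt_top (h w)⟩

/-- a fuzzy frame satisfies (i) `{w' | R(w,w') = 1}` finite for all `w` and
(ii) `sup {R(w,w') | R(w,w') < 1} < 1` for all `w`, iff it validates `𝟏 ⧀ ◇((p ⧀ q) ∧ q)`. -/
theorem stmt4 {W : Type} [Nonempty W] (R : W → W → TV) :
    ((∀ w : W, {w' | R w w' = 1}.Finite) ∧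
     (∀ w : W, sSup {x : TV | ∃ w', R w w' < 1 ∧ R w w' = x} < 1)) ↔
    (∀ (v : ℕ → W → TV) (w : W), fval R v phiFin w = 1) :=
  stmt4_general R
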